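/- arXiv:2002.11187 — 2 statements merged into one kernel-verified Lean document; each statement's English description precedes it below -/
import Mathlib

section
/- For any random variables X ~ p and Y ~ q and measurable bounded f, E_p[log σ(f(X))] + E_q[log σ(-f(Y))] ≤ log σ(E_p[f(X)] - E_q[f(Y)]). -/
/-!
Since `log ∘ σ` is concave (its derivative `σ(-x)` is decreasing), Jensen's inequality gives
`E_p[log σ(f)] ≤ log σ(E_p f)` and `E_q[log σ(-f)] ≤ log σ(-E_q f)`. The two bounds combine through
`σ(a) σ(-b) ≤ σ(a - b)`, i.e. `1 + e^(b - a) ≤ (1 + e^(-a))(1 + eᵇ)`.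
-/

open MeasureTheory Real

noncomputable def logisticSigmoid (x : ℝ) : ℝ := Real.exp x / (1 + Real.exp x)

theorem logisticSigmoid_eq_sigmoid : logisticSigmoid = sigmoid := by
  funext x
  rw [logisticSigmoid, sigmoid_def, exp_neg]
  field_simp
  ring

theorem hasDerivAt_log_sigmoid (x : ℝ) :
    HasDerivAt (fun t => log (sigmoid t)) (sigmoid (-x)) x := by
  convert (hasDerivAt_sigmoid x).log (sigmoid_pos x).ne' using 1
  rw [sigmoid_neg]
  field_simp [(sigmoid_pos x).ne']

theorem differentiable_log_sigmoid : Differentiable ℝ fun t => log (sigmoid t) :=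
  fun x => (hasDerivAt_log_sigmoid x).differentiableAt

theorem continuous_log_sigmoid : Continuous fun t => log (sigmoid t) :=
  differentiable_log_sigmoid.continuous

theorem concaveOn_log_sigmoid : ConcaveOn ℝ Set.univ fun t => log (sigmoid t) := by
  refine Antitone.concaveOn_univ_of_deriv differentiable_log_sigmoid ?_
  intro x y hxy
  rw [(hasDerivAt_log_sigmoid x).deriv, (hasDerivAt_log_sigmoid y).deriv]
  exact sigmoid_monotone (neg_le_neg hxy)

theorem abs_log_sigmoid_le (x : ℝ) : |log (sigmoid x)| ≤ |x| + log 2 := by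
  have hpos : 0 < 1 + exp (-x) := by positivity
  have hbound : 1 + exp (-x) ≤ 2 * exp |x| := by
    have h1 : 1 ≤ exp |x| := one_le_exp (abs_nonneg x)
    have h2 : exp (-x) ≤ exp |x| := exp_le_exp.mpr (neg_le_abs x)
    linarith
  have hlog : log (1 + exp (-x)) ≤ |x| + log 2 := by
    calc log (1 + exp (-x)) ≤ log (2 * exp |x|) := log_le_log hpos hbound
      _ = |x| + log 2 := by rw [log_mul two_ne_zero (exp_pos _).ne', log_exp, add_comm]
  have hnonneg : 0 ≤ log (1 + exp (-x)) :=
    log_nonneg (le_add_of_nonneg_right (exp_pos _).le)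
  rw [sigmoid_def, log_inv, abs_neg, abs_of_nonneg hnonneg]
  exact hlog

theorem MeasureTheory.Integrable.log_sigmoid {α : Type*} [MeasurableSpace α] {μ : Measure α}
    [IsFiniteMeasure μ] {f : α → ℝ} (hf : Integrable f μ) :
    Integrable (fun x => log (sigmoid (f x))) μ :=
  (hf.abs.add (integrable_const (log 2))).mono'
    (continuous_log_sigmoid.comp_aestronglyMeasurable hf.aestronglyMeasurable)
    (Filter.Eventually.of_forall fun x => abs_log_sigmoid_le (f x))

theorem integral_log_sigmoid_le {α : Type*} [MeasurableSpace α] {μ : Measure α}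
    [IsProbabilityMeasure μ] {f : α → ℝ} (hf : Integrable f μ) :
    ∫ x, log (sigmoid (f x)) ∂μ ≤ log (sigmoid (∫ x, f x ∂μ)) :=
  concaveOn_log_sigmoid.le_map_integral continuous_log_sigmoid.continuousOn isClosed_univ
    (Filter.Eventually.of_forall fun _ => trivial) hf hf.log_sigmoid

theorem sigmoid_mul_sigmoid_neg_le (a b : ℝ) : sigmoid a * sigmoid (-b) ≤ sigmoid (a - b) := by
  simp only [sigmoid_def, neg_neg, neg_sub, ← mul_inv]
  rw [inv_le_inv₀ (by positivity) (by positivity), sub_eq_add_neg, exp_add]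
  nlinarith [exp_pos b, exp_pos (-a)]

theorem log_sigmoid_add_log_sigmoid_neg_le (a b : ℝ) :
    log (sigmoid a) + log (sigmoid (-b)) ≤ log (sigmoid (a - b)) := by
  rw [← log_mul (sigmoid_pos a).ne' (sigmoid_pos (-b)).ne']
  exact log_le_log (mul_pos (sigmoid_pos a) (sigmoid_pos (-b))) (sigmoid_mul_sigmoid_neg_le a b)

theorem mean_embedding_upper_bound_expectation
    {𝒳 : Type*} [MeasurableSpace 𝒳]
    (p q : Measure 𝒳) [IsProbabilityMeasure p] [IsProbabilityMeasure q]
    (f : 𝒳 → ℝ) (hf : Measurable f) (M : ℝ) (hM : ∀ x, |f x| ≤ M) :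
    (∫ x, Real.log (logisticSigmoid (f x)) ∂p) +
      (∫ y, Real.log (logisticSigmoid (-(f y))) ∂q) ≤
    Real.log (logisticSigmoid ((∫ x, f x ∂p) - ∫ y, f y ∂q)) := by
  have hint : ∀ μ : Measure 𝒳, [IsProbabilityMeasure μ] → Integrable f μ := fun μ _ =>
    Integrable.of_bound hf.aestronglyMeasurable M (Filter.Eventually.of_forall hM)
  rw [logisticSigmoid_eq_sigmoid]
  have hp := integral_log_sigmoid_le (hint p)
  have hq := integral_log_sigmoid_le (f := fun y => -f y) (hint q).neg
  rw [integral_neg] at hq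
  linarith [log_sigmoid_add_log_sigmoid_neg_le (∫ x, f x ∂p) (∫ y, f y ∂q)]
end

section
/- Let p, q be probability measures on 𝒳 with positive densities. The function f*(x) = log(p(x)/q(x)) maximizes the objective J(f) = E_p[log σ(f)] + E_q[log(1 − σ(f))] over all measurable f : 𝒳 → ℝ, i.e., J(f) ≤ J(f*) for all measurable f. -/
open MeasureTheory
open scoped ENNReal NNReal

lemma sigmoid_pos (t : ℝ) : 0 < logisticSigmoid t := by
  unfold logisticSigmoid
  positivity

lemma sigmoid_lt_one (t : ℝ) : logisticSigmoid t < 1 := by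
  unfold logisticSigmoid
  rw [div_lt_one (by positivity)]
  linarith [Real.exp_pos t]

lemma sigmoid_log_ratio (a b : ℝ) (ha : 0 < a) (hb : 0 < b) :
    logisticSigmoid (Real.log (a / b)) = a / (a + b) := by
  unfold logisticSigmoid
  have h : (1:ℝ) + a / b = (a + b) / b := by field_simp; ring
  rw [Real.exp_log (by positivity), h, div_div_eq_mul_div, div_mul_cancel₀ _ hb.ne']

lemma sigmoid_measurable : Measurable logisticSigmoid :=
  Real.measurable_exp.div (measurable_const.add Real.measurable_exp)

lemma key_ineq (a b s : ℝ) (ha : 0 < a) (hb : 0 < b) (hs0 : 0 < s) (hs1 : s < 1) :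
    a * Real.log s + b * Real.log (1 - s) ≤
    a * Real.log (a / (a + b)) + b * Real.log (b / (a + b)) := by
  have hc : 0 < a + b := by linarith
  have h1s : 0 < 1 - s := by linarith
  have e1 : Real.log (s * (a + b) / a) = Real.log s + Real.log (a + b) - Real.log a := by
    rw [Real.log_div (by positivity) ha.ne', Real.log_mul hs0.ne' hc.ne']
  have e2 : Real.log ((1 - s) * (a + b) / b)
      = Real.log (1 - s) + Real.log (a + b) - Real.log b := by
    rw [Real.log_div (by positivity) hb.ne', Real.log_mul h1s.ne' hc.ne']
  have e3 : Real.log (a / (a + b)) = Real.log a - Real.log (a + b) :=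
    Real.log_div ha.ne' hc.ne'
  have e4 : Real.log (b / (a + b)) = Real.log b - Real.log (a + b) :=
    Real.log_div hb.ne' hc.ne'
  have l1 := Real.log_le_sub_one_of_pos (show (0:ℝ) < s * (a + b) / a by positivity)
  have l2 := Real.log_le_sub_one_of_pos (show (0:ℝ) < (1 - s) * (a + b) / b by positivity)
  have m1 : a * (Real.log s + Real.log (a + b) - Real.log a) ≤ s * (a + b) - a := by
    calc a * (Real.log s + Real.log (a + b) - Real.log a)
        = a * Real.log (s * (a + b) / a) := by rw [e1]
      _ ≤ a * (s * (a + b) / a - 1) := mul_le_mul_of_nonneg_left l1 ha.le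
      _ = s * (a + b) - a := by field_simp
  have m2 : b * (Real.log (1 - s) + Real.log (a + b) - Real.log b) ≤ (1 - s) * (a + b) - b := by
    calc b * (Real.log (1 - s) + Real.log (a + b) - Real.log b)
        = b * Real.log ((1 - s) * (a + b) / b) := by rw [e2]
      _ ≤ b * ((1 - s) * (a + b) / b - 1) := mul_le_mul_of_nonneg_left l2 hb.le
      _ = (1 - s) * (a + b) - b := by field_simp
  rw [e3, e4]
  nlinarith [m1, m2]

lemma integral_density {𝒳 : Type*} [MeasurableSpace 𝒳] (μ : Measure 𝒳)
    (d : 𝒳 → ℝ) (hd : Measurable d) (hdpos : ∀ x, 0 < d x) (g : 𝒳 → ℝ) :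
    (∫ x, g x ∂(μ.withDensity fun x => ENNReal.ofReal (d x)))
      = ∫ x, d x * g x ∂μ := by
  have h : (fun x => ENNReal.ofReal (d x)) = fun x => ((d x).toNNReal : ℝ≥0∞) := rfl
  rw [h, integral_withDensity_eq_integral_smul hd.real_toNNReal]
  congr 1
  funext x
  simp [NNReal.smul_def, Real.coe_toNNReal _ (hdpos x).le]

lemma integrable_density {𝒳 : Type*} [MeasurableSpace 𝒳] (μ : Measure 𝒳)
    (d : 𝒳 → ℝ) (hd : Measurable d) (hdpos : ∀ x, 0 < d x) (g : 𝒳 → ℝ)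
    (hg : Integrable g (μ.withDensity fun x => ENNReal.ofReal (d x))) :
    Integrable (fun x => d x * g x) μ := by
  have h : (fun x => ENNReal.ofReal (d x)) = fun x => ((d x).toNNReal : ℝ≥0∞) := rfl
  rw [h] at hg
  have := (integrable_withDensity_iff_integrable_smul hd.real_toNNReal).mp hg
  have heq : (fun x => (d x).toNNReal • g x) = fun x => d x * g x := by
    funext x
    simp [NNReal.smul_def, Real.coe_toNNReal _ (hdpos x).le]
  rwa [heq] at this

theorem log_density_ratio_maximizes_objective
    {𝒳 : Type*} [MeasurableSpace 𝒳]
    (μ : Measure 𝒳) [SigmaFinite μ]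
    (dp dq : 𝒳 → ℝ) (hdp : Measurable dp) (hdq : Measurable dq)
    (hdp_pos : ∀ x, 0 < dp x) (hdq_pos : ∀ x, 0 < dq x)
    (p q : Measure 𝒳)
    (hp : p = μ.withDensity (fun x => ENNReal.ofReal (dp x)))
    (hq : q = μ.withDensity (fun x => ENNReal.ofReal (dq x)))
    [IsProbabilityMeasure p] [IsProbabilityMeasure q]
    (fstar : 𝒳 → ℝ) (hfstar : ∀ x, fstar x = Real.log (dp x / dq x))
    (J : (𝒳 → ℝ) → ℝ)
    (hJ : ∀ f : 𝒳 → ℝ, J f = (∫ x, Real.log (logisticSigmoid (f x)) ∂p) +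
        ∫ x, Real.log (1 - logisticSigmoid (f x)) ∂q) :
    ∀ f : 𝒳 → ℝ, Measurable f →
      Integrable (fun x => Real.log (logisticSigmoid (f x))) p →
      Integrable (fun x => Real.log (1 - logisticSigmoid (f x))) q →
      J f ≤ J fstar := by
  intro f hf hInt1 hInt2
  set g1 : 𝒳 → ℝ := fun x => Real.log (logisticSigmoid (f x)) with hg1def
  set g2 : 𝒳 → ℝ := fun x => Real.log (1 - logisticSigmoid (f x)) with hg2def
  set h1 : 𝒳 → ℝ := fun x => Real.log (dp x / (dp x + dq x)) with hh1def
  set h2 : 𝒳 → ℝ := fun x => Real.log (dq x / (dp x + dq x)) with hh2def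
  have hsum_pos : ∀ x, 0 < dp x + dq x := fun x => by
    have := hdp_pos x; have := hdq_pos x; linarith
  -- sigmoid of fstar
  have hσ : ∀ x, logisticSigmoid (fstar x) = dp x / (dp x + dq x) := fun x => by
    rw [hfstar x]; exact sigmoid_log_ratio _ _ (hdp_pos x) (hdq_pos x)
  have hσ' : ∀ x, 1 - logisticSigmoid (fstar x) = dq x / (dp x + dq x) := fun x => by
    rw [hσ x, eq_div_iff (hsum_pos x).ne', sub_mul, div_mul_cancel₀ _ (hsum_pos x).ne']
    ring
  -- pointwise inequality
  have hGH : ∀ x, dp x * g1 x + dq x * g2 x ≤ dp x * h1 x + dq x * h2 x := fun x =>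
    key_ineq (dp x) (dq x) (logisticSigmoid (f x)) (hdp_pos x) (hdq_pos x)
      (sigmoid_pos _) (sigmoid_lt_one _)
  -- sign facts
  have hg1_nonpos : ∀ x, g1 x ≤ 0 := fun x =>
    Real.log_nonpos (sigmoid_pos _).le (sigmoid_lt_one _).le
  have hg2_nonpos : ∀ x, g2 x ≤ 0 := fun x =>
    Real.log_nonpos (by linarith [sigmoid_lt_one (f x)]) (by linarith [sigmoid_pos (f x)])
  have hh1_nonpos : ∀ x, h1 x ≤ 0 := fun x =>
    Real.log_nonpos (div_nonneg (hdp_pos x).le (hsum_pos x).le)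
      ((div_le_one (hsum_pos x)).mpr (by linarith [hdq_pos x]))
  have hh2_nonpos : ∀ x, h2 x ≤ 0 := fun x =>
    Real.log_nonpos (div_nonneg (hdq_pos x).le (hsum_pos x).le)
      ((div_le_one (hsum_pos x)).mpr (by linarith [hdp_pos x]))
  -- integrability over μ of the f-terms
  have hInt1μ : Integrable (fun x => dp x * g1 x) μ := by
    apply integrable_density μ dp hdp hdp_pos
    rw [← hp]; exact hInt1
  have hInt2μ : Integrable (fun x => dq x * g2 x) μ := by
    apply integrable_density μ dq hdq hdq_pos
    rw [← hq]; exact hInt2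
  have hG : Integrable (fun x => dp x * g1 x + dq x * g2 x) μ := hInt1μ.add hInt2μ
  -- measurability of h-terms
  have hmh1 : Measurable h1 := Real.measurable_log.comp (hdp.div (hdp.add hdq))
  have hmh2 : Measurable h2 := Real.measurable_log.comp (hdq.div (hdp.add hdq))
  -- G ≤ 0, and G ≤ dp*h1, G ≤ dq*h2
  have hG_nonpos : ∀ x, dp x * g1 x + dq x * g2 x ≤ 0 := fun x => by
    have := mul_nonpos_of_nonneg_of_nonpos (hdp_pos x).le (hg1_nonpos x)
    have := mul_nonpos_of_nonneg_of_nonpos (hdq_pos x).le (hg2_nonpos x)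
    linarith
  have hG_le_h1 : ∀ x, dp x * g1 x + dq x * g2 x ≤ dp x * h1 x := fun x => by
    have := hGH x
    have := mul_nonpos_of_nonneg_of_nonpos (hdq_pos x).le (hh2_nonpos x)
    linarith
  have hG_le_h2 : ∀ x, dp x * g1 x + dq x * g2 x ≤ dq x * h2 x := fun x => by
    have := hGH x
    have := mul_nonpos_of_nonneg_of_nonpos (hdp_pos x).le (hh1_nonpos x)
    linarith
  -- integrability of h-terms over μ by domination
  have hInth1μ : Integrable (fun x => dp x * h1 x) μ := by
    refine hG.mono ((hdp.mul hmh1).aestronglyMeasurable) (Filter.Eventually.of_forall fun x => ?_)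
    rw [Real.norm_eq_abs, Real.norm_eq_abs,
      abs_of_nonpos (mul_nonpos_of_nonneg_of_nonpos (hdp_pos x).le (hh1_nonpos x)),
      abs_of_nonpos (hG_nonpos x)]
    linarith [hG_le_h1 x]
  have hInth2μ : Integrable (fun x => dq x * h2 x) μ := by
    refine hG.mono ((hdq.mul hmh2).aestronglyMeasurable) (Filter.Eventually.of_forall fun x => ?_)
    rw [Real.norm_eq_abs, Real.norm_eq_abs,
      abs_of_nonpos (mul_nonpos_of_nonneg_of_nonpos (hdq_pos x).le (hh2_nonpos x)),
      abs_of_nonpos (hG_nonpos x)]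
    linarith [hG_le_h2 x]
  have hH : Integrable (fun x => dp x * h1 x + dq x * h2 x) μ := hInth1μ.add hInth2μ
  -- compute J f and J fstar as integrals over μ
  have hJf : J f = ∫ x, (dp x * g1 x + dq x * g2 x) ∂μ := by
    rw [hJ f, hp, hq, integral_density μ dp hdp hdp_pos, integral_density μ dq hdq hdq_pos,
      integral_add hInt1μ hInt2μ]
  have hJfs : J fstar = ∫ x, (dp x * h1 x + dq x * h2 x) ∂μ := by
    rw [hJ fstar, hp, hq, integral_density μ dp hdp hdp_pos, integral_density μ dq hdq hdq_pos]
    have E1 : (∫ x, dp x * Real.log (logisticSigmoid (fstar x)) ∂μ) = ∫ x, dp x * h1 x ∂μ := by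
      apply integral_congr_ae
      filter_upwards with x
      rw [hσ x]
    have E2 : (∫ x, dq x * Real.log (1 - logisticSigmoid (fstar x)) ∂μ) = ∫ x, dq x * h2 x ∂μ := by
      apply integral_congr_ae
      filter_upwards with x
      rw [hσ' x]
    rw [E1, E2, integral_add hInth1μ hInth2μ]
  rw [hJf, hJfs]
  exact integral_mono hG hH hGH
end
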